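/- arXiv:1905.07739 — 12 statements merged into one kernel-verified Lean document; each statement's English description precedes it below -/
import Mathlib

section
/- If a phase automaton A is inductive with respect to a transition system TS (i.e., initiation, inductiveness along edges, and edge covering hold for every valuation of the view variables), then A is a phase invariant of TS: every finite trace of TS, under every valuation, admits a corresponding trace of phases of A such that each state satisfies its phase characterization and each consecutive pair of states satisfies the edge-labeling relation. -/
/-! The phase run is built one step at a time for a fixed valuation: edge covering supplies
the next phase, and inductiveness along that edge puts the next state in its characterization. -/

namespace PhaseAutomaton

variable {S Q : Type*} (δ : Q → Q → Set (S × S)) (φ : Q → Set S)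

def IsRun (σ : ℕ → S) (n : ℕ) (qs : ℕ → Q) : Prop :=
  (∀ i < n, (σ i, σ (i + 1)) ∈ δ (qs i) (qs (i + 1))) ∧ ∀ i ≤ n, σ i ∈ φ (qs i)

variable {δ φ}

theorem IsRun.update_succ {σ : ℕ → S} {n : ℕ} {qs : ℕ → Q} (hrun : IsRun δ φ σ n qs)
    (hind : ∀ q p σ σ', σ ∈ φ q → (σ, σ') ∈ δ q p → σ' ∈ φ p)
    {p : Q} (hp : (σ n, σ (n + 1)) ∈ δ (qs n) p) :
    IsRun δ φ σ (n + 1) (Function.update qs (n + 1) p) := by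
  obtain ⟨hedge, hphase⟩ := hrun
  have hkeep : ∀ i ≤ n, Function.update qs (n + 1) p i = qs i := fun i hi =>
    Function.update_of_ne (by omega) _ _
  constructor
  · intro i hi
    rcases Nat.lt_succ_iff_lt_or_eq.mp hi with hi | rfl
    · rw [hkeep i hi.le, hkeep (i + 1) hi]
      exact hedge i hi
    · rwa [hkeep i le_rfl, Function.update_self]
  · intro i hi
    rcases Nat.le_succ_iff.mp hi with hi | rfl
    · rw [hkeep i hi]
      exact hphase i hi
    · rw [Function.update_self]
      exact hind _ _ _ _ (hphase n le_rfl) hp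

theorem exists_isRun {TR : Set (S × S)} {ι : Q} {σ : ℕ → S} (h0 : σ 0 ∈ φ ι)
    (hind : ∀ q p σ σ', σ ∈ φ q → (σ, σ') ∈ δ q p → σ' ∈ φ p)
    (hcov : ∀ q σ σ', σ ∈ φ q → (σ, σ') ∈ TR → ∃ p, (σ, σ') ∈ δ q p) :
    ∀ n, (∀ i < n, (σ i, σ (i + 1)) ∈ TR) → ∃ qs : ℕ → Q, qs 0 = ι ∧ IsRun δ φ σ n qs
  | 0, _ => ⟨fun _ => ι, rfl, fun _ hi => absurd hi (Nat.not_lt_zero _),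
      fun i hi => by rwa [Nat.le_zero.mp hi]⟩
  | n + 1, hTR => by
    obtain ⟨qs, hq0, hrun⟩ := exists_isRun h0 hind hcov n fun i hi => hTR i (by omega)
    obtain ⟨p, hp⟩ := hcov (qs n) _ _ (hrun.2 n le_rfl) (hTR n n.lt_succ_self)
    exact ⟨_, by rwa [Function.update_of_ne n.succ_ne_zero.symm], hrun.update_succ hind hp⟩

end PhaseAutomaton

theorem inductive_phase_automaton_is_phase_invariant_general
    {S V Q : Type*}
    (Init : Set S) (TR : Set (S × S)) (ι : Q)
    (δ : Q → Q → V → Set (S × S)) (φ : Q → V → Set S)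
    (hinit : ∀ v, Init ⊆ φ ι v)
    (hind : ∀ q p v σ σ', σ ∈ φ q v → (σ, σ') ∈ δ q p v → σ' ∈ φ p v)
    (hcov : ∀ q v σ σ', σ ∈ φ q v → (σ, σ') ∈ TR → ∃ p, (σ, σ') ∈ δ q p v) :
    ∀ (n : ℕ) (σ : ℕ → S), σ 0 ∈ Init → (∀ i < n, (σ i, σ (i + 1)) ∈ TR) →
      ∀ v : V, ∃ qs : ℕ → Q, qs 0 = ι ∧
        (∀ i < n, (σ i, σ (i + 1)) ∈ δ (qs i) (qs (i + 1)) v) ∧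
        (∀ i ≤ n, σ i ∈ φ (qs i) v) := by
  intro n σ h0 hTR v
  exact PhaseAutomaton.exists_isRun (φ := (φ · v)) (hinit v h0) (fun q p => hind q p v)
    (fun q => hcov q v) n hTR

/-- If a phase automaton is inductive w.r.t. a transition system, it is a phase invariant. -/
theorem inductive_phase_automaton_is_phase_invariant
    {S V Q : Type*} [Fintype Q]
    (Init : Set S) (TR : Set (S × S)) (ι : Q)
    (δ : Q → Q → V → Set (S × S)) (φ : Q → V → Set S)
    (hinit : ∀ v, Init ⊆ φ ι v)
    (hind : ∀ q p v σ σ', σ ∈ φ q v → (σ, σ') ∈ δ q p v → σ' ∈ φ p v)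
    (hcov : ∀ q v σ σ', σ ∈ φ q v → (σ, σ') ∈ TR → ∃ p, (σ, σ') ∈ δ q p v) :
    ∀ (n : ℕ) (σ : ℕ → S), σ 0 ∈ Init → (∀ i < n, (σ i, σ (i + 1)) ∈ TR) →
      ∀ v : V, ∃ qs : ℕ → Q, qs 0 = ι ∧
        (∀ i < n, (σ i, σ (i + 1)) ∈ δ (qs i) (qs (i + 1)) v) ∧
        (∀ i ≤ n, σ i ∈ φ (qs i) v) :=
  inductive_phase_automaton_is_phase_invariant_general Init TR ι δ φ hinit hind hcov
end

section
/- If a phase automaton A is inductive with respect to a transition system TS and A is safe with respect to a property P (meaning φ q v ⊆ P v for every phase q and valuation v), then every reachable state of TS satisfies P v for every valuation v. -/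
/-! The union over all phases of the phase invariants `φ q v` is an inductive invariant of the
transition system: initiation puts the initial states in phase `ι`, and along a transition edge
covering supplies an automaton edge, which inductiveness follows into the target phase.
Safety of every phase then transfers to every reachable state. -/

section PhaseAutomaton

variable {S V Q : Type*} {Init : Set S} {TR : Set (S × S)} {ι : Q}
  {δ : Q → Q → V → Set (S × S)} {φ : Q → V → Set S}

theorem exists_phase_of_mem_phase_of_step
    (hind : ∀ q p v σ σ', σ ∈ φ q v → (σ, σ') ∈ δ q p v → σ' ∈ φ p v)
    (hcov : ∀ q v σ σ', σ ∈ φ q v → (σ, σ') ∈ TR → ∃ p, (σ, σ') ∈ δ q p v)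
    {v : V} {q : Q} {σ σ' : S} (hσ : σ ∈ φ q v) (hstep : (σ, σ') ∈ TR) :
    ∃ p, σ' ∈ φ p v :=
  let ⟨p, hedge⟩ := hcov q v σ σ' hσ hstep
  ⟨p, hind q p v σ σ' hσ hedge⟩

theorem exists_phase_of_trace
    (hinit : ∀ v, Init ⊆ φ ι v)
    (hind : ∀ q p v σ σ', σ ∈ φ q v → (σ, σ') ∈ δ q p v → σ' ∈ φ p v)
    (hcov : ∀ q v σ σ', σ ∈ φ q v → (σ, σ') ∈ TR → ∃ p, (σ, σ') ∈ δ q p v)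
    (v : V) {τ : ℕ → S} (h0 : τ 0 ∈ Init) :
    ∀ {n : ℕ}, (∀ i < n, (τ i, τ (i + 1)) ∈ TR) → ∃ q, τ n ∈ φ q v
  | 0, _ => ⟨ι, hinit v h0⟩
  | n + 1, hsteps =>
    let ⟨_, hq⟩ := exists_phase_of_trace hinit hind hcov v h0
      fun i hi => hsteps i (Nat.lt_succ_of_lt hi)
    exists_phase_of_mem_phase_of_step hind hcov hq (hsteps n n.lt_succ_self)

end PhaseAutomaton

theorem inductive_safe_phase_automaton_implies_safety_general
    {S V Q : Type*}
    (Init : Set S) (TR : Set (S × S)) (ι : Q)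
    (δ : Q → Q → V → Set (S × S)) (φ : Q → V → Set S) (P : V → Set S)
    (hinit : ∀ v, Init ⊆ φ ι v)
    (hind : ∀ q p v σ σ', σ ∈ φ q v → (σ, σ') ∈ δ q p v → σ' ∈ φ p v)
    (hcov : ∀ q v σ σ', σ ∈ φ q v → (σ, σ') ∈ TR → ∃ p, (σ, σ') ∈ δ q p v)
    (hsafe : ∀ q v, φ q v ⊆ P v) :
    ∀ σ : S,
      (∃ (n : ℕ) (τ : ℕ → S), τ 0 ∈ Init ∧ (∀ i < n, (τ i, τ (i + 1)) ∈ TR) ∧ τ n = σ) →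
      ∀ v : V, σ ∈ P v := by
  rintro σ ⟨n, τ, h0, hsteps, rfl⟩ v
  obtain ⟨q, hq⟩ := exists_phase_of_trace hinit hind hcov v h0 hsteps
  exact hsafe q v hq

/-- An inductive and safe phase automaton implies every reachable state satisfies P. -/
theorem inductive_safe_phase_automaton_implies_safety
    {S V Q : Type*} [Fintype Q]
    (Init : Set S) (TR : Set (S × S)) (ι : Q)
    (δ : Q → Q → V → Set (S × S)) (φ : Q → V → Set S) (P : V → Set S)
    (hinit : ∀ v, Init ⊆ φ ι v)
    (hind : ∀ q p v σ σ', σ ∈ φ q v → (σ, σ') ∈ δ q p v → σ' ∈ φ p v)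
    (hcov : ∀ q v σ σ', σ ∈ φ q v → (σ, σ') ∈ TR → ∃ p, (σ, σ') ∈ δ q p v)
    (hsafe : ∀ q v, φ q v ⊆ P v) :
    ∀ σ : S,
      (∃ (n : ℕ) (τ : ℕ → S), τ 0 ∈ Init ∧ (∀ i < n, (τ i, τ (i + 1)) ∈ TR) ∧ τ n = σ) →
      ∀ v : V, σ ∈ P v :=
  inductive_safe_phase_automaton_implies_safety_general Init TR ι δ φ P hinit hind hcov hsafe
end

section
/- If a phase automaton A = (Q, ι, δ, φ) is inductive with respect to a transition system TS = (Init, TR), then the set Inv = { σ | ∀ v, ∃ q ∈ Q, σ ∈ φ q v } is an inductive invariant of TS, i.e., Init ⊆ Inv and Inv is closed under TR. -/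
theorem inductive_phase_automaton_yields_inductive_invariant_general
    {S V Q : Type*}
    (Init : Set S) (TR : Set (S × S)) (ι : Q)
    (δ : Q → Q → V → Set (S × S)) (φ : Q → V → Set S)
    (hinit : ∀ v, Init ⊆ φ ι v)
    (hind : ∀ q p v σ σ', σ ∈ φ q v → (σ, σ') ∈ δ q p v → σ' ∈ φ p v)
    (hcov : ∀ q v σ σ', σ ∈ φ q v → (σ, σ') ∈ TR → ∃ p, (σ, σ') ∈ δ q p v) :
    ∀ Inv : Set S, Inv = {σ | ∀ v : V, ∃ q : Q, σ ∈ φ q v} →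
      Init ⊆ Inv ∧ (∀ σ σ', (σ, σ') ∈ TR → σ ∈ Inv → σ' ∈ Inv) := by
  rintro Inv rfl
  refine ⟨fun σ hσ v => ⟨ι, hinit v hσ⟩, fun σ σ' hstep hσ v => ?_⟩
  obtain ⟨q, hq⟩ := hσ v
  obtain ⟨p, hp⟩ := hcov q v σ σ' hq hstep
  exact ⟨p, hind q p v σ σ' hq hp⟩

/-- The disjunction of phase characterizations of an inductive phase automaton,
    universally quantified over valuations, is an inductive invariant. -/
theorem inductive_phase_automaton_yields_inductive_invariant
    {S V Q : Type*} [Fintype Q]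
    (Init : Set S) (TR : Set (S × S)) (ι : Q)
    (δ : Q → Q → V → Set (S × S)) (φ : Q → V → Set S)
    (hinit : ∀ v, Init ⊆ φ ι v)
    (hind : ∀ q p v σ σ', σ ∈ φ q v → (σ, σ') ∈ δ q p v → σ' ∈ φ p v)
    (hcov : ∀ q v σ σ', σ ∈ φ q v → (σ, σ') ∈ TR → ∃ p, (σ, σ') ∈ δ q p v) :
    ∀ Inv : Set S, Inv = {σ | ∀ v : V, ∃ q : Q, σ ∈ φ q v} →
      Init ⊆ Inv ∧ (∀ σ σ', (σ, σ') ∈ TR → σ ∈ Inv → σ' ∈ Inv) :=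
  inductive_phase_automaton_yields_inductive_invariant_general Init TR ι δ φ hinit hind hcov
end

section
/- If a phase automaton A simulates a transition system TS, then A is a phase invariant of TS: for every finite trace σ₀,…,σₙ of TS and every valuation v, there exists a phase trace q₀,…,qₙ with q₀ = ι, σᵢ ∈ φ qᵢ v for all i, and (σᵢ,σᵢ₊₁) ∈ δ qᵢ qᵢ₊₁ v for all i < n. -/
/-! Choose the phases so that `(σᵢ, qᵢ) ∈ H` along the whole trace: the initial clause of the
simulation starts this at `ι`, the step clause extends it by one transition at a time, and the first
clause turns it into `σᵢ ∈ φ qᵢ v`. -/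

theorem exists_phase_run_of_forall_exists_step {S Q : Type*} {TR : Set (S × S)}
    {H : Set (S × Q)} {Δ : Q → Q → Set (S × S)}
    (hstep : ∀ σ σ' q, (σ, σ') ∈ TR → (σ, q) ∈ H → ∃ q', (σ', q') ∈ H ∧ (σ, σ') ∈ Δ q q')
    {σ : ℕ → S} {q₀ : Q} (hq₀ : (σ 0, q₀) ∈ H) :
    ∀ n, (∀ i < n, (σ i, σ (i + 1)) ∈ TR) → ∃ qs : ℕ → Q, qs 0 = q₀ ∧
      (∀ i ≤ n, (σ i, qs i) ∈ H) ∧ (∀ i < n, (σ i, σ (i + 1)) ∈ Δ (qs i) (qs (i + 1))) := by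
  intro n htr
  induction n with
  | zero => exact ⟨fun _ => q₀, rfl, fun i hi => by rwa [Nat.le_zero.mp hi], by simp⟩
  | succ n ih =>
    obtain ⟨qs, hqs₀, hH, hΔ⟩ := ih fun i hi => htr i (by omega)
    obtain ⟨q', hq'H, hq'Δ⟩ := hstep _ _ _ (htr n n.lt_succ_self) (hH n le_rfl)
    refine ⟨fun i => if i ≤ n then qs i else q', by simpa using hqs₀, fun i hi => ?_,
      fun i hi => ?_⟩
    · obtain hi | rfl := Nat.lt_succ_iff_lt_or_eq.mp (Nat.lt_succ_of_le hi)
      · simpa [Nat.le_of_lt_succ hi] using hH i (Nat.le_of_lt_succ hi)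
      · simpa using hq'H
    · obtain hi | rfl := Nat.lt_succ_iff_lt_or_eq.mp hi
      · simpa [hi.le, Nat.succ_le_of_lt hi] using hΔ i hi
      · simpa using hq'Δ

/-- If a phase automaton simulates TS, then it is a phase invariant of TS. -/
theorem simulation_implies_phase_invariant
    {S V Q : Type*}
    (Init : Set S) (TR : Set (S × S)) (ι : Q)
    (δ : Q → Q → V → Set (S × S)) (φ : Q → V → Set S)
    (hsim : ∀ v : V, ∃ H : Set (S × Q),
      (∀ σ q, (σ, q) ∈ H → σ ∈ φ q v) ∧
      (∀ σ₀ ∈ Init, (σ₀, ι) ∈ H) ∧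
      (∀ σ σ' q, (σ, σ') ∈ TR → (σ, q) ∈ H →
        ∃ q', (σ', q') ∈ H ∧ (σ, σ') ∈ δ q q' v)) :
    ∀ (n : ℕ) (σ : ℕ → S), σ 0 ∈ Init → (∀ i < n, (σ i, σ (i + 1)) ∈ TR) →
      ∀ v : V, ∃ qs : ℕ → Q, qs 0 = ι ∧
        (∀ i ≤ n, σ i ∈ φ (qs i) v) ∧
        (∀ i < n, (σ i, σ (i + 1)) ∈ δ (qs i) (qs (i + 1)) v) := by
  intro n σ hinit htr v
  obtain ⟨H, hφ, hι, hstep⟩ := hsim v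
  obtain ⟨qs, hqs₀, hH, hδ⟩ :=
    exists_phase_run_of_forall_exists_step (Δ := (δ · · v)) hstep (hι _ hinit) n htr
  exact ⟨qs, hqs₀, fun i hi => hφ _ _ (hH i hi), hδ⟩
end

section
/- Let A = (Q, ι, δ, φ) be an inductive phase automaton with respect to TS, and let < be a linear order on Q. Define δ'(q,p)(v) = δ(q,p)(v) \ ⋃_{p' < p} δ(q,p')(v). Then the automaton A' = (Q, ι, δ', φ) is deterministic (for each q, v, the sets δ'(q,p)(v) for distinct p are pairwise disjoint) and is still inductive with respect to TS. -/
/-- Determinization of an inductive phase automaton preserves inductiveness. -/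
theorem determinization_preserves_inductiveness
    {S V Q : Type*} [Fintype Q] [LinearOrder Q]
    (Init : Set S) (TR : Set (S × S)) (ι : Q)
    (δ : Q → Q → V → Set (S × S)) (φ : Q → V → Set S)
    (hinit : ∀ v, Init ⊆ φ ι v)
    (hind : ∀ q p v σ σ', σ ∈ φ q v → (σ, σ') ∈ δ q p v → σ' ∈ φ p v)
    (hcov : ∀ q v σ σ', σ ∈ φ q v → (σ, σ') ∈ TR → ∃ p, (σ, σ') ∈ δ q p v) :
    ∀ δ' : Q → Q → V → Set (S × S),
      (∀ q p v, δ' q p v = δ q p v \ ⋃ p' ∈ Set.Iio p, δ q p' v) →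
      ((∀ q v p₁ p₂, p₁ ≠ p₂ → δ' q p₁ v ∩ δ' q p₂ v = ∅) ∧
       (∀ v, Init ⊆ φ ι v) ∧
       (∀ q p v σ σ', σ ∈ φ q v → (σ, σ') ∈ δ' q p v → σ' ∈ φ p v) ∧
       (∀ q v σ σ', σ ∈ φ q v → (σ, σ') ∈ TR → ∃ p, (σ, σ') ∈ δ' q p v)) := by
  intro δ' hδ'
  refine ⟨?_, hinit, ?_, ?_⟩
  · intro q v p₁ p₂ hne
    ext x
    simp only [Set.mem_inter_iff, Set.mem_empty_iff_false, iff_false, not_and]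
    intro h1 h2
    rw [hδ'] at h1 h2
    rcases hne.lt_or_gt with h | h
    · exact h2.2 (Set.mem_biUnion h h1.1)
    · exact h1.2 (Set.mem_biUnion h h2.1)
  · intro q p v σ σ' hφ hδ
    rw [hδ'] at hδ
    exact hind q p v σ σ' hφ hδ.1
  · intro q v σ σ' hφ hTR
    obtain ⟨p, hp⟩ := hcov q v σ σ' hφ hTR
    have hne : ({p' | (σ, σ') ∈ δ q p' v} : Set Q).Nonempty := ⟨p, hp⟩
    have hfin : ({p' | (σ, σ') ∈ δ q p' v} : Set Q).Finite := Set.toFinite _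
    obtain ⟨m, hm, hmin⟩ := Set.Finite.exists_minimalFor id _ hfin hne
    refine ⟨m, ?_⟩
    rw [hδ']
    refine ⟨hm, ?_⟩
    intro hx
    simp only [Set.mem_iUnion, Set.mem_Iio] at hx
    obtain ⟨p', hlt, hmem⟩ := hx
    exact absurd (le_antisymm (hmin hmem hlt.le) hlt.le).symm hlt.ne
end

section
/- If there exists a counterexample trace for a phase structure S, transition system TS, and property P — that is, a trace σ₀,…,σₙ of TS with a valuation v and matching phase trace q₀ = ι,…,qₙ such that either some σᵢ ∉ P v, or some σᵢ has a TR-successor σ' with (σᵢ,σ') ∉ δ qᵢ q' v for every q' — then no assignment of phase characterizations φ over the structure S yields a safe inductive phase automaton with respect to TS and P. -/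
theorem mem_of_step_closed_of_matching {S Q : Type*} {φ : Q → Set S} {δ : Q → Q → Set (S × S)}
    (hclosed : ∀ q p s s', s ∈ φ q → (s, s') ∈ δ q p → s' ∈ φ p)
    {n : ℕ} {σ : ℕ → S} {qs : ℕ → Q} (h0 : σ 0 ∈ φ (qs 0))
    (hmatch : ∀ i < n, (σ i, σ (i + 1)) ∈ δ (qs i) (qs (i + 1))) :
    ∀ i ≤ n, σ i ∈ φ (qs i)
  | 0, _ => h0
  | i + 1, hi =>
    hclosed _ _ _ _ (mem_of_step_closed_of_matching hclosed h0 hmatch i (by omega)) (hmatch i hi)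

theorem counterexample_trace_implies_no_safe_inductive_automaton_general
    {S V Q : Type*}
    (Init : Set S) (TR : Set (S × S)) (ι : Q)
    (δ : Q → Q → V → Set (S × S)) (P : V → Set S)
    (n : ℕ) (σ : ℕ → S) (v : V) (qs : ℕ → Q)
    (h0 : σ 0 ∈ Init)
    (hq0 : qs 0 = ι)
    (hmatch : ∀ i < n, (σ i, σ (i + 1)) ∈ δ (qs i) (qs (i + 1)) v)
    (hviol :
      (∃ i ≤ n, σ i ∉ P v) ∨
      (∃ i ≤ n, ∃ σ' : S, (σ i, σ') ∈ TR ∧ ∀ q' : Q, (σ i, σ') ∉ δ (qs i) q' v)) :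
    ¬ ∃ φ : Q → V → Set S,
        (∀ v', Init ⊆ φ ι v') ∧
        (∀ q p v' s s', s ∈ φ q v' → (s, s') ∈ δ q p v' → s' ∈ φ p v') ∧
        (∀ q v' s s', s ∈ φ q v' → (s, s') ∈ TR → ∃ p, (s, s') ∈ δ q p v') ∧
        (∀ q v', φ q v' ⊆ P v') := by
  rintro ⟨φ, hinit, hind, htot, hsafe⟩
  have hmem : ∀ i ≤ n, σ i ∈ φ (qs i) v :=
    mem_of_step_closed_of_matching (fun q p s s' => hind q p v s s')
      (hq0 ▸ hinit v h0) hmatch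
  rcases hviol with ⟨i, hi, hunsafe⟩ | ⟨i, hi, σ', hTR, hstuck⟩
  · exact hunsafe (hsafe _ v (hmem i hi))
  · obtain ⟨p, hp⟩ := htot _ v _ _ (hmem i hi) hTR
    exact hstuck p hp

/-- A counterexample trace implies no safe inductive phase automaton exists
    over the given phase structure. -/
theorem counterexample_trace_implies_no_safe_inductive_automaton
    {S V Q : Type*}
    (Init : Set S) (TR : Set (S × S)) (ι : Q)
    (δ : Q → Q → V → Set (S × S)) (P : V → Set S)
    (n : ℕ) (σ : ℕ → S) (v : V) (qs : ℕ → Q)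
    (h0 : σ 0 ∈ Init) (hstep : ∀ i < n, (σ i, σ (i + 1)) ∈ TR)
    (hq0 : qs 0 = ι)
    (hmatch : ∀ i < n, (σ i, σ (i + 1)) ∈ δ (qs i) (qs (i + 1)) v)
    (hviol :
      (∃ i ≤ n, σ i ∉ P v) ∨
      (∃ i ≤ n, ∃ σ' : S, (σ i, σ') ∈ TR ∧ ∀ q' : Q, (σ i, σ') ∉ δ (qs i) q' v)) :
    ¬ ∃ φ : Q → V → Set S,
        (∀ v', Init ⊆ φ ι v') ∧
        (∀ q p v' s s', s ∈ φ q v' → (s, s') ∈ δ q p v' → s' ∈ φ p v') ∧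
        (∀ q v' s s', s ∈ φ q v' → (s, s') ∈ TR → ∃ p, (s, s') ∈ δ q p v') ∧
        (∀ q v', φ q v' ⊆ P v') :=
  counterexample_trace_implies_no_safe_inductive_automaton_general Init TR ι δ P n σ v qs h0 hq0
    hmatch hviol
end

section
/- If there exists an abstract counterexample trace with respect to an abstraction preorder ≤_L — i.e., a sequence σ₁,…,σₙ with valuation v, phases q₁ = ι,…,qₙ, and intermediate states σ̃ᵢ with (σ̃ᵢ, v) ≤_L (σᵢ, v) and (σ̃ᵢ,σᵢ₊₁) ∈ TR and (σ̃ᵢ,σᵢ₊₁) ∈ δ qᵢ qᵢ₊₁ v for all i < n, and σ₁ ∈ Init, such that either σᵢ ∉ P v for some i, or some σᵢ has a TR-successor σ' with (σ̃,σ') ∉ δ qᵢ q' v for all q' for some σ̃ with (σ̃,v) ≤_L (σᵢ,v), where here the violation is witnessed at (σᵢ, qᵢ) — then there is no safe inductive phase automaton over the given structure whose phase characterizations are all closed under the abstraction, i.e., such that (σ̃,v) ≤_L (σ,v) and σ ∈ φ q v imply σ̃ ∈ φ q v. -/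
/-!
Any safe inductive automaton whose characterizations are closed under abstraction would contain
the whole abstract trace: closure moves `σ i ∈ φ (qs i) v` down to the abstract state `σtil i`,
and inductiveness carries it along the step into `δ (qs i) (qs (i + 1)) v`. At the violating
position, safety or (again after closure) completeness of the automaton is contradicted.
-/

section PhaseAutomaton

variable {S V Q : Type*} {TR : Set (S × S)} {δ : Q → Q → V → Set (S × S)}
  {leL : (S × V) → (S × V) → Prop} {φ : Q → V → Set S} {v : V}

theorem mem_phase_of_abstract_trace {Init : Set S} {ι : Q} {n : ℕ} {σ σtil : ℕ → S} {qs : ℕ → Q}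
    (hclosed : ∀ q s st, s ∈ φ q v → leL (st, v) (s, v) → st ∈ φ q v)
    (hinit : Init ⊆ φ ι v)
    (hind : ∀ q p s s', s ∈ φ q v → (s, s') ∈ δ q p v → s' ∈ φ p v)
    (h0 : σ 0 ∈ Init) (hq0 : qs 0 = ι)
    (habs : ∀ i < n, leL (σtil i, v) (σ i, v))
    (hmatch : ∀ i < n, (σtil i, σ (i + 1)) ∈ δ (qs i) (qs (i + 1)) v) :
    ∀ i ≤ n, σ i ∈ φ (qs i) v := by
  intro i
  induction i with
  | zero => exact fun _ => hq0 ▸ hinit h0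
  | succ k ih =>
    intro hk
    have hkn : k < n := hk
    exact hind _ _ _ _ (hclosed _ _ _ (ih hkn.le) (habs k hkn)) (hmatch k hkn)

theorem exists_phase_step_of_abstract_step {q : Q} {s st s' : S}
    (hclosed : ∀ s st, s ∈ φ q v → leL (st, v) (s, v) → st ∈ φ q v)
    (hcomp : ∀ s s', s ∈ φ q v → (s, s') ∈ TR → ∃ p, (s, s') ∈ δ q p v)
    (hs : s ∈ φ q v) (hle : leL (st, v) (s, v)) (htr : (st, s') ∈ TR) :
    ∃ p, (st, s') ∈ δ q p v :=
  hcomp _ _ (hclosed _ _ hs hle) htr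

end PhaseAutomaton

theorem abstract_counterexample_trace_implies_no_safe_inductive_automaton_general
    {S V Q : Type*}
    (Init : Set S) (TR : Set (S × S)) (ι : Q)
    (δ : Q → Q → V → Set (S × S)) (P : V → Set S)
    (leL : (S × V) → (S × V) → Prop)
    (n : ℕ) (σ : ℕ → S) (σtil : ℕ → S) (v : V) (qs : ℕ → Q)
    (h0 : σ 0 ∈ Init) (hq0 : qs 0 = ι)
    (habs : ∀ i < n, leL (σtil i, v) (σ i, v))
    (hmatch : ∀ i < n, (σtil i, σ (i + 1)) ∈ δ (qs i) (qs (i + 1)) v)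
    (hviol :
      (∃ i ≤ n, σ i ∉ P v) ∨
      (∃ i ≤ n, ∃ σt σ' : S, leL (σt, v) (σ i, v) ∧ (σt, σ') ∈ TR ∧
        ∀ q' : Q, (σt, σ') ∉ δ (qs i) q' v)) :
    ¬ ∃ φ : Q → V → Set S,
        (∀ q v' s st, s ∈ φ q v' → leL (st, v') (s, v') → st ∈ φ q v') ∧
        (∀ v', Init ⊆ φ ι v') ∧
        (∀ q p v' s s', s ∈ φ q v' → (s, s') ∈ δ q p v' → s' ∈ φ p v') ∧
        (∀ q v' s s', s ∈ φ q v' → (s, s') ∈ TR → ∃ p, (s, s') ∈ δ q p v') ∧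
        (∀ q v', φ q v' ⊆ P v') := by
  rintro ⟨φ, hclosed, hinit, hind, hcomp, hsafe⟩
  have hreach : ∀ i ≤ n, σ i ∈ φ (qs i) v :=
    mem_phase_of_abstract_trace (fun q => hclosed q v) (hinit v)
      (fun q p => hind q p v) h0 hq0 habs hmatch
  rcases hviol with ⟨i, hi, hunsafe⟩ | ⟨i, hi, σt, σ', hle, htr, hstuck⟩
  · exact hunsafe (hsafe _ _ (hreach i hi))
  · obtain ⟨p, hp⟩ := exists_phase_step_of_abstract_step (hclosed (qs i) v) (hcomp (qs i) v)
      (hreach i hi) hle htr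
    exact hstuck p hp

/-- An abstract counterexample trace implies no safe inductive phase automaton
    with abstraction-closed characterizations exists over the given structure. -/
theorem abstract_counterexample_trace_implies_no_safe_inductive_automaton
    {S V Q : Type*}
    (Init : Set S) (TR : Set (S × S)) (ι : Q)
    (δ : Q → Q → V → Set (S × S)) (P : V → Set S)
    (leL : (S × V) → (S × V) → Prop) (hrefl : ∀ x, leL x x)
    (n : ℕ) (σ : ℕ → S) (σtil : ℕ → S) (v : V) (qs : ℕ → Q)
    (h0 : σ 0 ∈ Init) (hq0 : qs 0 = ι)
    (habs : ∀ i < n, leL (σtil i, v) (σ i, v))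
    (hstep : ∀ i < n, (σtil i, σ (i + 1)) ∈ TR)
    (hmatch : ∀ i < n, (σtil i, σ (i + 1)) ∈ δ (qs i) (qs (i + 1)) v)
    (hviol :
      (∃ i ≤ n, σ i ∉ P v) ∨
      (∃ i ≤ n, ∃ σt σ' : S, leL (σt, v) (σ i, v) ∧ (σt, σ') ∈ TR ∧
        ∀ q' : Q, (σt, σ') ∉ δ (qs i) q' v)) :
    ¬ ∃ φ : Q → V → Set S,
        (∀ q v' s st, s ∈ φ q v' → leL (st, v') (s, v') → st ∈ φ q v') ∧
        (∀ v', Init ⊆ φ ι v') ∧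
        (∀ q p v' s s', s ∈ φ q v' → (s, s') ∈ δ q p v' → s' ∈ φ p v') ∧
        (∀ q v' s s', s ∈ φ q v' → (s, s') ∈ TR → ∃ p, (s, s') ∈ δ q p v') ∧
        (∀ q v', φ q v' ⊆ P v') :=
  abstract_counterexample_trace_implies_no_safe_inductive_automaton_general Init TR ι δ P leL n σ
    σtil v qs h0 hq0 habs hmatch hviol
end

section
/- Suppose a sequence of frames F₀,…,Fₙ (each Fᵢ : Q → V → Set S) satisfies: F₀ ι v = Init and F₀ q v = ∅ for q ≠ ι; monotonicity Fᵢ q v ⊆ Fᵢ₊₁ q v; and relative inductiveness: σ ∈ Fᵢ q v ∧ (σ,σ') ∈ δ q p v → σ' ∈ Fᵢ₊₁ p v for all i < n; and edge covering for each frame: σ ∈ Fᵢ q v ∧ (σ,σ') ∈ TR → ∃ p, (σ,σ') ∈ δ q p v. Then for every trace σ₀,…,σₖ of TS with k ≤ n and every valuation v, there is a phase trace q₀ = ι,…,q_k with (σⱼ,σⱼ₊₁) ∈ δ qⱼ qⱼ₊₁ v and σⱼ ∈ Fⱼ qⱼ v for all j ≤ k. -/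
/-!
Induction on the length of the trace: edge covering at frame `k` yields a phase `p` whose
transition relation contains the step `σ k → σ (k + 1)`, and relative inductiveness then places
`σ (k + 1)` in frame `k + 1` at phase `p`.
-/

open Function

section FramedPhaseTrace

variable {S V Q : Type*} (δ : Q → Q → V → Set (S × S)) (F : ℕ → Q → V → Set S)

def IsFramedPhaseTrace (σ : ℕ → S) (v : V) (k : ℕ) (qs : ℕ → Q) : Prop :=
  (∀ j < k, (σ j, σ (j + 1)) ∈ δ (qs j) (qs (j + 1)) v) ∧ ∀ j ≤ k, σ j ∈ F j (qs j) v

variable {δ F}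

theorem IsFramedPhaseTrace.update_succ {σ : ℕ → S} {v : V} {k : ℕ} {qs : ℕ → Q} {p : Q}
    (h : IsFramedPhaseTrace δ F σ v k qs) (hδ : (σ k, σ (k + 1)) ∈ δ (qs k) p v)
    (hF : σ (k + 1) ∈ F (k + 1) p v) :
    IsFramedPhaseTrace δ F σ v (k + 1) (update qs (k + 1) p) := by
  constructor
  · intro j hj
    rcases Nat.lt_succ_iff_lt_or_eq.mp hj with hj | rfl
    · rw [update_of_ne (by omega), update_of_ne (by omega)]
      exact h.1 j hj
    · rwa [update_of_ne (by omega), update_self]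
  · intro j hj
    rcases Nat.le_succ_iff.mp hj with hj | rfl
    · rw [update_of_ne (by omega)]
      exact h.2 j hj
    · rwa [update_self]

end FramedPhaseTrace

theorem frames_overapproximate_bounded_traces_general
    {S V Q : Type*}
    (Init : Set S) (TR : Set (S × S)) (ι : Q)
    (δ : Q → Q → V → Set (S × S))
    (n : ℕ) (F : ℕ → Q → V → Set S)
    (hF0ι : ∀ v, F 0 ι v = Init)
    (hrelind : ∀ i < n, ∀ q p v σ σ',
      σ ∈ F i q v → (σ, σ') ∈ δ q p v → σ' ∈ F (i + 1) p v)
    (hcov : ∀ i ≤ n, ∀ q v σ σ',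
      σ ∈ F i q v → (σ, σ') ∈ TR → ∃ p, (σ, σ') ∈ δ q p v) :
    ∀ k ≤ n, ∀ σ : ℕ → S, σ 0 ∈ Init → (∀ j < k, (σ j, σ (j + 1)) ∈ TR) →
      ∀ v : V, ∃ qs : ℕ → Q, qs 0 = ι ∧
        (∀ j < k, (σ j, σ (j + 1)) ∈ δ (qs j) (qs (j + 1)) v) ∧
        (∀ j ≤ k, σ j ∈ F j (qs j) v) := by
  intro k hk σ hσ0 hTR v
  suffices ∃ qs : ℕ → Q, qs 0 = ι ∧ IsFramedPhaseTrace δ F σ v k qs from this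
  induction k with
  | zero =>
    refine ⟨fun _ => ι, rfl, by simp, fun j hj => ?_⟩
    rw [Nat.le_zero.mp hj, hF0ι]
    exact hσ0
  | succ k ih =>
    obtain ⟨qs, hqs0, htrace⟩ := ih (by omega) fun j hj => hTR j (by omega)
    have hσk := htrace.2 k le_rfl
    obtain ⟨p, hp⟩ := hcov k (by omega) _ v _ _ hσk (hTR k k.lt_succ_self)
    exact ⟨update qs (k + 1) p, by rwa [update_of_ne k.succ_ne_zero.symm],
      htrace.update_succ hp (hrelind k hk _ _ _ _ _ hσk hp)⟩

/-- Frames satisfying the PDR-style conditions overapproximate the states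
    reachable at each phase within the corresponding number of steps. -/
theorem frames_overapproximate_bounded_traces
    {S V Q : Type*}
    (Init : Set S) (TR : Set (S × S)) (ι : Q)
    (δ : Q → Q → V → Set (S × S))
    (n : ℕ) (F : ℕ → Q → V → Set S)
    (hF0ι : ∀ v, F 0 ι v = Init)
    (hF0 : ∀ q v, q ≠ ι → F 0 q v = ∅)
    (hmono : ∀ i < n, ∀ q v, F i q v ⊆ F (i + 1) q v)
    (hrelind : ∀ i < n, ∀ q p v σ σ',
      σ ∈ F i q v → (σ, σ') ∈ δ q p v → σ' ∈ F (i + 1) p v)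
    (hcov : ∀ i ≤ n, ∀ q v σ σ',
      σ ∈ F i q v → (σ, σ') ∈ TR → ∃ p, (σ, σ') ∈ δ q p v) :
    ∀ k ≤ n, ∀ σ : ℕ → S, σ 0 ∈ Init → (∀ j < k, (σ j, σ (j + 1)) ∈ TR) →
      ∀ v : V, ∃ qs : ℕ → Q, qs 0 = ι ∧
        (∀ j < k, (σ j, σ (j + 1)) ∈ δ (qs j) (qs (j + 1)) v) ∧
        (∀ j ≤ k, σ j ∈ F j (qs j) v) :=
  frames_overapproximate_bounded_traces_general Init TR ι δ n F hF0ι hrelind hcov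
end

section
/- If, in a PDR-style frame sequence F₀,…,Fₙ over a phase structure satisfying the frame conditions (frame 0 equals Init at ι and ∅ elsewhere, frame monotonicity, relative inductiveness between consecutive frames, and per-frame edge covering), some frame Fᵢ is a fixpoint in the sense that Fᵢ₊₁ q v ⊆ Fᵢ q v for all q, v (with i < n), then the phase automaton (Q, ι, δ, Fᵢ) is inductive with respect to TS. -/
theorem frame_fixpoint_is_inductive_general
    {S V Q : Type*}
    (Init : Set S) (TR : Set (S × S)) (ι : Q)
    (δ : Q → Q → V → Set (S × S))
    (n : ℕ) (F : ℕ → Q → V → Set S)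
    (hF0ι : ∀ v, F 0 ι v = Init)
    (hmono : ∀ j < n, ∀ q v, F j q v ⊆ F (j + 1) q v)
    (hrelind : ∀ j < n, ∀ q p v σ σ',
      σ ∈ F j q v → (σ, σ') ∈ δ q p v → σ' ∈ F (j + 1) p v)
    (hcov : ∀ j ≤ n, ∀ q v σ σ',
      σ ∈ F j q v → (σ, σ') ∈ TR → ∃ p, (σ, σ') ∈ δ q p v)
    (i : ℕ) (hi : i < n)
    (hfix : ∀ q v, F (i + 1) q v ⊆ F i q v) :
    (∀ v, Init ⊆ F i ι v) ∧
    (∀ q p v σ σ', σ ∈ F i q v → (σ, σ') ∈ δ q p v → σ' ∈ F i p v) ∧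
    (∀ q v σ σ', σ ∈ F i q v → (σ, σ') ∈ TR → ∃ p, (σ, σ') ∈ δ q p v) := by
  have hchain : ∀ v, MonotoneOn (fun j ↦ F j ι v) (Set.Iic n) := fun v ↦
    monotoneOn_of_le_add_one Set.ordConnected_Iic fun j _ _ hj ↦ hmono j hj ι v
  refine ⟨fun v ↦ ?_, fun q p v σ σ' hσ hδ ↦ hfix p v (hrelind i hi q p v σ σ' hσ hδ),
    hcov i hi.le⟩
  rw [← hF0ι v]
  exact hchain v (Nat.zero_le n) hi.le (Nat.zero_le i)

/-- If a frame in a PDR-style frame sequence is a fixpoint, it yields an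
    inductive phase automaton. -/
theorem frame_fixpoint_is_inductive
    {S V Q : Type*}
    (Init : Set S) (TR : Set (S × S)) (ι : Q)
    (δ : Q → Q → V → Set (S × S))
    (n : ℕ) (F : ℕ → Q → V → Set S)
    (hF0ι : ∀ v, F 0 ι v = Init)
    (hF0 : ∀ q v, q ≠ ι → F 0 q v = ∅)
    (hmono : ∀ j < n, ∀ q v, F j q v ⊆ F (j + 1) q v)
    (hrelind : ∀ j < n, ∀ q p v σ σ',
      σ ∈ F j q v → (σ, σ') ∈ δ q p v → σ' ∈ F (j + 1) p v)
    (hcov : ∀ j ≤ n, ∀ q v σ σ',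
      σ ∈ F j q v → (σ, σ') ∈ TR → ∃ p, (σ, σ') ∈ δ q p v)
    (i : ℕ) (hi : i < n)
    (hfix : ∀ q v, F (i + 1) q v ⊆ F i q v) :
    (∀ v, Init ⊆ F i ι v) ∧
    (∀ q p v σ σ', σ ∈ F i q v → (σ, σ') ∈ δ q p v → σ' ∈ F i p v) ∧
    (∀ q v σ σ', σ ∈ F i q v → (σ, σ') ∈ TR → ∃ p, (σ, σ') ∈ δ q p v) :=
  frame_fixpoint_is_inductive_general Init TR ι δ n F hF0ι hmono hrelind hcov i hi hfix
end

section
/- The weakened inductiveness-plus-covering condition — for every phase q and valuation v, if σ ∈ φ q v and (σ,σ') ∈ TR then there exists p with (σ,σ') ∈ δ q p v and σ' ∈ φ p v — together with initiation, suffices to show that the automaton is a phase invariant of TS (every finite TS-trace under every valuation is matched by a phase trace whose states satisfy the characterizations). Moreover, for deterministic automata in which every δ-edge relation is contained in TR, the weak condition together with the strong edge-covering condition implies the strong inductiveness condition. -/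
/-!
A phase trace is built one step at a time: at each step the weak condition, applied to the
current phase and the next transition, supplies a successor phase. For a deterministic
automaton the successor it supplies for an edge of `δ q p v` can only be `p`, because the edge
relations leaving `q` are pairwise disjoint.
-/

theorem exists_chain_of_forall_exists_step {Q : Type*} {P : ℕ → Q → Prop}
    {R : ℕ → Q → Q → Prop} {q₀ : Q} (h₀ : P 0 q₀) (n : ℕ)
    (hstep : ∀ i < n, ∀ q, P i q → ∃ p, R i q p ∧ P (i + 1) p) :
    ∃ qs : ℕ → Q, qs 0 = q₀ ∧ (∀ i < n, R i (qs i) (qs (i + 1))) ∧ ∀ i ≤ n, P i (qs i) := by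
  induction n with
  | zero =>
    refine ⟨fun _ => q₀, rfl, fun i hi => absurd hi i.not_lt_zero, fun i hi => ?_⟩
    rwa [Nat.le_zero.mp hi]
  | succ n ih =>
    obtain ⟨qs, hqs₀, hR, hP⟩ := ih fun i hi => hstep i (by omega)
    obtain ⟨p, hRp, hPp⟩ := hstep n n.lt_succ_self (qs n) (hP n le_rfl)
    have hupdate : ∀ i ≤ n, Function.update qs (n + 1) p i = qs i := fun i hi =>
      Function.update_of_ne (by omega) _ _
    refine ⟨Function.update qs (n + 1) p, by rw [hupdate 0 n.zero_le, hqs₀], ?_, ?_⟩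
    · intro i hi
      rcases Nat.lt_succ_iff_lt_or_eq.mp hi with hi | rfl
      · rw [hupdate i hi.le, hupdate (i + 1) hi]
        exact hR i hi
      · rwa [hupdate i le_rfl, Function.update_self]
    · intro i hi
      rcases Nat.le_succ_iff.mp hi with hi | rfl
      · rw [hupdate i hi]
        exact hP i hi
      · rwa [Function.update_self]

theorem eq_of_mem_of_inter_eq_empty {α ι : Type*} {s : ι → Set α}
    (hdisj : ∀ i j, i ≠ j → s i ∩ s j = ∅) {x : α} {i j : ι} (hi : x ∈ s i) (hj : x ∈ s j) :
    i = j := by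
  by_contra hne
  exact (Set.eq_empty_iff_forall_notMem.mp (hdisj i j hne)) x ⟨hi, hj⟩

theorem mem_phase_of_mem_edge_of_deterministic {S Q : Type*} {TR : Set (S × S)}
    {δ : Q → Q → Set (S × S)} {φ : Q → Set S}
    (hweak : ∀ q σ σ', σ ∈ φ q → (σ, σ') ∈ TR → ∃ p, (σ, σ') ∈ δ q p ∧ σ' ∈ φ p)
    (hdet : ∀ q p₁ p₂, p₁ ≠ p₂ → δ q p₁ ∩ δ q p₂ = ∅) (hsub : ∀ q p, δ q p ⊆ TR)
    {q p : Q} {σ σ' : S} (hσ : σ ∈ φ q) (hedge : (σ, σ') ∈ δ q p) : σ' ∈ φ p := by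
  obtain ⟨p', hedge', hσ'⟩ := hweak q σ σ' hσ (hsub q p hedge)
  rwa [eq_of_mem_of_inter_eq_empty (hdet q) hedge hedge']

/-- The weakened inductiveness-plus-covering condition together with initiation
    suffices for a phase invariant; moreover, for deterministic automata whose
    edges are contained in TR, the weak condition with strong edge covering
    implies strong inductiveness. -/
theorem weak_condition_suffices_and_implies_strong_for_deterministic
    {S V Q : Type*}
    (Init : Set S) (TR : Set (S × S)) (ι : Q)
    (δ : Q → Q → V → Set (S × S)) (φ : Q → V → Set S)
    (hinit : ∀ v, Init ⊆ φ ι v)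
    (hweak : ∀ q v σ σ', σ ∈ φ q v → (σ, σ') ∈ TR →
      ∃ p, (σ, σ') ∈ δ q p v ∧ σ' ∈ φ p v) :
    (∀ (n : ℕ) (σ : ℕ → S), σ 0 ∈ Init → (∀ i < n, (σ i, σ (i + 1)) ∈ TR) →
      ∀ v : V, ∃ qs : ℕ → Q, qs 0 = ι ∧
        (∀ i < n, (σ i, σ (i + 1)) ∈ δ (qs i) (qs (i + 1)) v) ∧
        (∀ i ≤ n, σ i ∈ φ (qs i) v)) ∧
    ((∀ q v p₁ p₂, p₁ ≠ p₂ → δ q p₁ v ∩ δ q p₂ v = ∅) →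
     (∀ q p v, δ q p v ⊆ TR) →
     (∀ q v σ σ', σ ∈ φ q v → (σ, σ') ∈ TR → ∃ p, (σ, σ') ∈ δ q p v) →
     (∀ q p v σ σ', σ ∈ φ q v → (σ, σ') ∈ δ q p v → σ' ∈ φ p v)) := by
  refine ⟨fun n σ hσ₀ htr v => ?_, fun hdet hsub _ q p v σ σ' hσ hedge => ?_⟩
  · exact exists_chain_of_forall_exists_step (P := fun i q => σ i ∈ φ q v)
      (R := fun i q p => (σ i, σ (i + 1)) ∈ δ q p v) (hinit v hσ₀) n
      fun i hi q hq => hweak q v _ _ hq (htr i hi)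
  · exact mem_phase_of_mem_edge_of_deterministic (hweak · v) (fun q => hdet q v)
      (fun q p => hsub q p v) hσ hedge
end

section
/- If two phase automata A₁ and A₂ share the same structure (Q, ι, δ) and A₂ is a strengthening of A₁ (φ₂ q v ⊆ φ₁ q v for all q, v), and A₂ is inductive with respect to TS, then A₁ is a phase invariant of TS. -/
/-! An inductive automaton is its own phase invariant: choose the phases greedily along the
trace, at each step taking an edge that the covering condition provides; consecution then keeps
every state inside `φ₂`. As `φ₂ ⊆ φ₁`, the same phase trace works for `φ₁`. -/

section PhaseAutomaton

variable {S V Q : Type*}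

open Classical in
noncomputable def greedyPhases (δ : Q → Q → V → Set (S × S)) (v : V) (σ : ℕ → S) (ι : Q) :
    ℕ → Q
  | 0 => ι
  | i + 1 =>
    if h : ∃ p, (σ i, σ (i + 1)) ∈ δ (greedyPhases δ v σ ι i) p v then h.choose
    else greedyPhases δ v σ ι i

variable (δ : Q → Q → V → Set (S × S)) (v : V) (σ : ℕ → S) (ι : Q)

theorem greedyPhases_zero : greedyPhases δ v σ ι 0 = ι := rfl

theorem greedyPhases_mem_edge {i : ℕ}
    (h : ∃ p, (σ i, σ (i + 1)) ∈ δ (greedyPhases δ v σ ι i) p v) :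
    (σ i, σ (i + 1)) ∈ δ (greedyPhases δ v σ ι i) (greedyPhases δ v σ ι (i + 1)) v := by
  rw [greedyPhases, dif_pos h]
  exact h.choose_spec

theorem greedyPhases_mem_of_inductive {TR : Set (S × S)} {φ : Q → V → Set S}
    (hind : ∀ q p σ σ', σ ∈ φ q v → (σ, σ') ∈ δ q p v → σ' ∈ φ p v)
    (hcov : ∀ q σ σ', σ ∈ φ q v → (σ, σ') ∈ TR → ∃ p, (σ, σ') ∈ δ q p v)
    (hσ₀ : σ 0 ∈ φ ι v) {n : ℕ} (htr : ∀ i < n, (σ i, σ (i + 1)) ∈ TR) :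
    ∀ i ≤ n, σ i ∈ φ (greedyPhases δ v σ ι i) v := by
  intro i hi
  induction i with
  | zero => exact hσ₀
  | succ i ih =>
    have hσi := ih (by omega)
    exact hind _ _ _ _ hσi
      (greedyPhases_mem_edge δ v σ ι (hcov _ _ _ hσi (htr i (by omega))))

end PhaseAutomaton

/-- If a strengthening of a phase automaton is inductive, the original
    automaton is a phase invariant. -/
theorem inductive_strengthening_implies_phase_invariant
    {S V Q : Type*}
    (Init : Set S) (TR : Set (S × S)) (ι : Q)
    (δ : Q → Q → V → Set (S × S)) (φ₁ φ₂ : Q → V → Set S)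
    (hstr : ∀ q v, φ₂ q v ⊆ φ₁ q v)
    (hinit : ∀ v, Init ⊆ φ₂ ι v)
    (hind : ∀ q p v σ σ', σ ∈ φ₂ q v → (σ, σ') ∈ δ q p v → σ' ∈ φ₂ p v)
    (hcov : ∀ q v σ σ', σ ∈ φ₂ q v → (σ, σ') ∈ TR → ∃ p, (σ, σ') ∈ δ q p v) :
    ∀ (n : ℕ) (σ : ℕ → S), σ 0 ∈ Init → (∀ i < n, (σ i, σ (i + 1)) ∈ TR) →
      ∀ v : V, ∃ qs : ℕ → Q, qs 0 = ι ∧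
        (∀ i < n, (σ i, σ (i + 1)) ∈ δ (qs i) (qs (i + 1)) v) ∧
        (∀ i ≤ n, σ i ∈ φ₁ (qs i) v) := by
  intro n σ hσ₀ htr v
  have hφ₂ : ∀ i ≤ n, σ i ∈ φ₂ (greedyPhases δ v σ ι i) v :=
    greedyPhases_mem_of_inductive δ v σ ι (hind · · v) (hcov · v) (hinit v hσ₀) htr
  refine ⟨greedyPhases δ v σ ι, greedyPhases_zero δ v σ ι, fun i hi => ?_,
    fun i hi => hstr _ _ (hφ₂ i hi)⟩
  exact greedyPhases_mem_edge δ v σ ι (hcov _ _ _ _ (hφ₂ i hi.le) (htr i hi))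
end

section
/- If every edge relation of a phase automaton is contained in the transition relation (δ q p v ⊆ TR for all q, p, v) and there exists a phase characterization assignment φ making the automaton inductive and safe with respect to P, then TS is safe with respect to P, and moreover the reachable-at-phase sets satisfy R q v ⊆ φ q v ⊆ P v for every phase q and valuation v. -/
/-!
An automaton-inductive `φ` contains every state reachable at phase `q`, by induction along the
run. Because every TS step out of `φ q v` is covered by some edge, `⋃ q, φ q v` is an ordinary
inductive invariant of TS, so every reachable state lies in some `φ q v ⊆ P v`.
-/

/-- σ is reachable at phase q under valuation v. -/
def ReachAt {S V Q : Type*} (Init : Set S) (TR : Set (S × S)) (ι : Q)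
    (δ : Q → Q → V → Set (S × S)) (q : Q) (v : V) : Set S :=
  {σ | ∃ (n : ℕ) (τ : ℕ → S) (qs : ℕ → Q),
    τ 0 ∈ Init ∧ (∀ i < n, (τ i, τ (i + 1)) ∈ TR) ∧
    qs 0 = ι ∧ (∀ i < n, (τ i, τ (i + 1)) ∈ δ (qs i) (qs (i + 1)) v) ∧
    τ n = σ ∧ qs n = q}

theorem trace_end_mem_of_invariant {S : Type*} {Init : Set S} {TR : Set (S × S)} {I : Set S}
    (hinit : Init ⊆ I) (hstep : ∀ σ σ', σ ∈ I → (σ, σ') ∈ TR → σ' ∈ I)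
    {n : ℕ} {τ : ℕ → S} (h0 : τ 0 ∈ Init) (htrace : ∀ i < n, (τ i, τ (i + 1)) ∈ TR) :
    τ n ∈ I := by
  induction n with
  | zero => exact hinit h0
  | succ n ih =>
    exact hstep _ _ (ih fun i hi => htrace i (Nat.lt_succ_of_lt hi)) (htrace n n.lt_succ_self)

theorem iUnion_closed_of_inductive_of_covering {S Q : Type*} {TR : Set (S × S)}
    {δ : Q → Q → Set (S × S)} {φ : Q → Set S}
    (hind : ∀ q p σ σ', σ ∈ φ q → (σ, σ') ∈ δ q p → σ' ∈ φ p)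
    (hcov : ∀ q σ σ', σ ∈ φ q → (σ, σ') ∈ TR → ∃ p, (σ, σ') ∈ δ q p) :
    ∀ σ σ', σ ∈ ⋃ q, φ q → (σ, σ') ∈ TR → σ' ∈ ⋃ q, φ q := by
  intro σ σ' hσ hTR
  obtain ⟨q, hq⟩ := Set.mem_iUnion.mp hσ
  obtain ⟨p, hp⟩ := hcov q σ σ' hq hTR
  exact Set.mem_iUnion.mpr ⟨p, hind q p σ σ' hq hp⟩

theorem reachAt_subset_of_inductive {S V Q : Type*} {Init : Set S} {TR : Set (S × S)} {ι : Q}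
    {δ : Q → Q → V → Set (S × S)} {φ : Q → Set S} {v : V}
    (hinit : Init ⊆ φ ι) (hind : ∀ q p σ σ', σ ∈ φ q → (σ, σ') ∈ δ q p v → σ' ∈ φ p)
    (q : Q) : ReachAt Init TR ι δ q v ⊆ φ q := by
  rintro σ ⟨n, τ, qs, h0, -, rfl, hδ, rfl, rfl⟩
  induction n with
  | zero => exact hinit h0
  | succ n ih =>
    exact hind _ _ _ _ (ih fun i hi => hδ i (Nat.lt_succ_of_lt hi)) (hδ n n.lt_succ_self)

theorem safe_inductive_automaton_implies_ts_safety_and_sandwich_general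
    {S V Q : Type*}
    (Init : Set S) (TR : Set (S × S)) (ι : Q)
    (δ : Q → Q → V → Set (S × S)) (φ : Q → V → Set S) (P : V → Set S)
    (hinit : ∀ v, Init ⊆ φ ι v)
    (hind : ∀ q p v σ σ', σ ∈ φ q v → (σ, σ') ∈ δ q p v → σ' ∈ φ p v)
    (hcov : ∀ q v σ σ', σ ∈ φ q v → (σ, σ') ∈ TR → ∃ p, (σ, σ') ∈ δ q p v)
    (hsafe : ∀ q v, φ q v ⊆ P v) :
    (∀ σ : S,
      (∃ (n : ℕ) (τ : ℕ → S), τ 0 ∈ Init ∧ (∀ i < n, (τ i, τ (i + 1)) ∈ TR) ∧ τ n = σ) →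
      ∀ v : V, σ ∈ P v) ∧
    (∀ q v, ReachAt Init TR ι δ q v ⊆ φ q v ∧ φ q v ⊆ P v) := by
  refine ⟨fun σ hσ v => ?_, fun q v => ⟨?_, hsafe q v⟩⟩
  · obtain ⟨n, τ, h0, htrace, rfl⟩ := hσ
    have hphase : τ n ∈ ⋃ q, φ q v :=
      trace_end_mem_of_invariant ((hinit v).trans (Set.subset_iUnion (φ · v) ι))
        (iUnion_closed_of_inductive_of_covering (fun q p => hind q p v) (fun q => hcov q v)) h0 htrace
    obtain ⟨q, hq⟩ := Set.mem_iUnion.mp hphase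
    exact hsafe q v hq
  · exact reachAt_subset_of_inductive (φ := (φ · v)) (hinit v) (fun q p => hind q p v) q

/-- If edges are contained in TR and φ makes the automaton inductive and safe
    w.r.t. P, then TS is safe w.r.t. P and R q v ⊆ φ q v ⊆ P v. -/
theorem safe_inductive_automaton_implies_ts_safety_and_sandwich
    {S V Q : Type*}
    (Init : Set S) (TR : Set (S × S)) (ι : Q)
    (δ : Q → Q → V → Set (S × S)) (φ : Q → V → Set S) (P : V → Set S)
    (hsub : ∀ q p v, δ q p v ⊆ TR)
    (hinit : ∀ v, Init ⊆ φ ι v)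
    (hind : ∀ q p v σ σ', σ ∈ φ q v → (σ, σ') ∈ δ q p v → σ' ∈ φ p v)
    (hcov : ∀ q v σ σ', σ ∈ φ q v → (σ, σ') ∈ TR → ∃ p, (σ, σ') ∈ δ q p v)
    (hsafe : ∀ q v, φ q v ⊆ P v) :
    (∀ σ : S,
      (∃ (n : ℕ) (τ : ℕ → S), τ 0 ∈ Init ∧ (∀ i < n, (τ i, τ (i + 1)) ∈ TR) ∧ τ n = σ) →
      ∀ v : V, σ ∈ P v) ∧
    (∀ q v, ReachAt Init TR ι δ q v ⊆ φ q v ∧ φ q v ⊆ P v) :=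
  safe_inductive_automaton_implies_ts_safety_and_sandwich_general Init TR ι δ φ P hinit hind hcov
    hsafe
end
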